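/- arXiv:1501.03444 — 4 statements merged into one kernel-verified Lean document; each statement's English description precedes it below -/
import Mathlib

section
/- Let n ≥ 1, 1 ≤ d ≤ n, and 1 ≤ k ≤ 2^n − 2^{n−d}. The fraction of functions f in P_k^n that possess at least one implicant of rank d is at most 2^d · C(n, d) · (1 − 2^{−d})^k. -/
open scoped Classical

/-- A conjunction (term) over `n` Boolean variables: a support set `supp ⊆ Fin n`
together with a sign assignment `sgn` (only its values on `supp` matter). -/
structure Conj (n : ℕ) where
  supp : Finset (Fin n)
  sgn : Fin n → Bool

/-- The rank of a conjunction: the number of literals, i.e. `|supp|`. -/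
def Conj.rank {n : ℕ} (K : Conj n) : ℕ := K.supp.card

/-- A conjunction covers a point `x` if `x` agrees with the sign assignment on the support. -/
def Conj.covers {n : ℕ} (K : Conj n) (x : Fin n → Bool) : Prop :=
  ∀ i ∈ K.supp, x i = K.sgn i

/-- `K` is an implicant of `f` if every point covered by `K` is a one of `f`. -/
def Implicant {n : ℕ} (K : Conj n) (f : (Fin n → Bool) → Bool) : Prop :=
  ∀ x, K.covers x → f x = true

/-- `K` is a prime implicant of `f` if it is an implicant of `f` and deleting
any coordinate of its support yields a conjunction which is not an implicant of `f`. -/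
def PrimeImplicant {n : ℕ} (K : Conj n) (f : (Fin n → Bool) → Bool) : Prop :=
  Implicant K f ∧ ∀ i ∈ K.supp, ¬ Implicant ⟨K.supp.erase i, K.sgn⟩ f

/-- The number of zeros of a Boolean function on `n` variables. -/
def zerosCard {n : ℕ} (f : (Fin n → Bool) → Bool) : ℕ :=
  (Finset.univ.filter (fun x => f x = false)).card

/-- `P_k^n`: the (finite) class of Boolean functions on `n` variables with exactly `k` zeros. -/
def Pclass (n k : ℕ) : Finset ((Fin n → Bool) → Bool) :=
  Finset.univ.filter (fun f => zerosCard f = k)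

/-- `D` is a DNF realization of `f`: `f x = true` iff some conjunction of `D` covers `x`. -/
def IsDNF {n : ℕ} (f : (Fin n → Bool) → Bool) (D : Finset (Conj n)) : Prop :=
  ∀ x, f x = true ↔ ∃ K ∈ D, K.covers x

/-- The fraction of functions in `P_k^n` satisfying property `P`. -/
noncomputable def frac (n k : ℕ) (P : ((Fin n → Bool) → Bool) → Prop) : ℝ :=
  (((Pclass n k).filter P).card : ℝ) / ((Pclass n k).card : ℝ)

/-!
A function with an implicant `K` of rank `d` has all its `k` zeros outside the `2^(n-d)` points
covered by `K`, so at most `C(2^n - 2^(n-d), k)` functions of `P_k^n` have `K` as an implicant,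
out of `|P_k^n| = C(2^n, k)`. Only the `2^d · C(n, d)` choices of support and signs matter, and
the union bound over them, together with `C(a, k) / C(m, k) ≤ (a / m)^k` for `a ≤ m`, gives the
claim since `(2^n - 2^(n-d)) / 2^n ≤ 1 - 2^(-d)`.
-/

open Finset

namespace Nat

theorem descFactorial_mul_pow_le_descFactorial_mul_pow {a m : ℕ} (h : a ≤ m) (k : ℕ) :
    a.descFactorial k * m ^ k ≤ m.descFactorial k * a ^ k := by
  induction k with
  | zero => simp
  | succ k ih =>
    have step : (a - k) * m ≤ (m - k) * a := by
      rw [Nat.sub_mul, Nat.sub_mul, mul_comm a m]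
      exact Nat.sub_le_sub_left (Nat.mul_le_mul_left k h) _
    rw [descFactorial_succ, descFactorial_succ, pow_succ, pow_succ]
    calc (a - k) * a.descFactorial k * (m ^ k * m)
        = ((a - k) * m) * (a.descFactorial k * m ^ k) := by ring
      _ ≤ ((m - k) * a) * (m.descFactorial k * a ^ k) := Nat.mul_le_mul step ih
      _ = (m - k) * m.descFactorial k * (a ^ k * a) := by ring

theorem choose_mul_pow_le_choose_mul_pow {a m : ℕ} (h : a ≤ m) (k : ℕ) :
    a.choose k * m ^ k ≤ m.choose k * a ^ k := by
  have := descFactorial_mul_pow_le_descFactorial_mul_pow h k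
  rw [descFactorial_eq_factorial_mul_choose, descFactorial_eq_factorial_mul_choose,
    mul_assoc, mul_assoc] at this
  exact Nat.le_of_mul_le_mul_left this k.factorial_pos

end Nat

theorem choose_div_choose_le_div_pow {a m : ℕ} (h : a ≤ m) (k : ℕ) :
    (a.choose k : ℝ) / m.choose k ≤ ((a : ℝ) / m) ^ k := by
  rcases (m.choose k).eq_zero_or_pos with hc | hc
  · rw [hc, Nat.cast_zero, div_zero]
    positivity
  rcases m.eq_zero_or_pos with rfl | hm
  · obtain rfl : a = 0 := Nat.le_zero.mp h
    obtain rfl : k = 0 := by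
      by_contra hk
      exact hc.ne' (Nat.choose_eq_zero_iff.mpr (by omega))
    simp
  rw [div_pow, div_le_div_iff₀ (by exact_mod_cast hc) (by positivity),
    mul_comm _ ((m.choose k : ℕ) : ℝ)]
  exact_mod_cast Nat.choose_mul_pow_le_choose_mul_pow h k

theorem two_pow_sub_two_pow_div_two_pow_le (n d : ℕ) :
    ((2 ^ n - 2 ^ (n - d) : ℕ) : ℝ) / 2 ^ n ≤ 1 - 1 / 2 ^ d := by
  have hcover : (2 : ℝ) ^ n ≤ 2 ^ (n - d) * 2 ^ d := by
    rw [← pow_add]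
    exact pow_le_pow_right₀ one_le_two (by omega)
  rw [Nat.cast_sub (Nat.pow_le_pow_right two_pos (Nat.sub_le n d)), sub_div]
  push_cast
  rw [div_self (by positivity)]
  gcongr 1 - ?_
  rw [div_le_div_iff₀ (by positivity) (by positivity)]
  linarith

theorem Conj.card_covers {n : ℕ} (K : Conj n) :
    #(univ.filter K.covers) = 2 ^ (n - K.rank) := by
  have : univ.filter K.covers =
      Fintype.piFinset (fun i => if i ∈ K.supp then {K.sgn i} else univ) := by
    ext x
    simp only [mem_filter, mem_univ, true_and, Fintype.mem_piFinset, Conj.covers]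
    refine ⟨fun hx i => ?_, fun hx i hi => by simpa [hi] using hx i⟩
    split_ifs with hi <;> simp [hx i, hi]
  rw [this, Fintype.card_piFinset]
  simp only [apply_ite card, card_singleton, card_univ, Fintype.card_bool]
  rw [prod_ite]
  simp [filter_notMem_eq_sdiff, ← compl_eq_univ_sdiff, card_compl, Conj.rank]

section Counting

variable {n k : ℕ}

def zeroSet (f : (Fin n → Bool) → Bool) : Finset (Fin n → Bool) :=
  univ.filter (fun x => f x = false)

theorem zeroSet_injective : Function.Injective (zeroSet (n := n)) := by
  intro f g h
  funext x
  have hx : f x = false ↔ g x = false := by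
    simpa [zeroSet] using congrArg (x ∈ ·) h
  cases hf : f x <;> cases hg : g x <;> simp_all

theorem card_Pclass : #(Pclass n k) = (2 ^ n).choose k := by
  have : (2 ^ n).choose k = #((univ : Finset (Fin n → Bool)).powersetCard k) := by simp
  rw [this]
  refine card_nbij' zeroSet (fun Z x => decide (x ∉ Z)) ?_ ?_ ?_ ?_
  · intro f hf
    rw [mem_coe, Pclass, mem_filter] at hf
    rw [mem_coe, mem_powersetCard]
    exact ⟨subset_univ _, hf.2⟩
  · intro Z hZ
    rw [mem_coe, mem_powersetCard] at hZ
    rw [mem_coe, Pclass, mem_filter, zerosCard]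
    refine ⟨mem_univ _, ?_⟩
    convert hZ.2 using 2
    ext x
    simp
  · intro f _
    funext x
    cases hf : f x <;> simp [zeroSet, hf]
  · intro Z _
    ext x
    simp [zeroSet]

theorem card_filter_Pclass_zeroSet_subset_le (C : Finset (Fin n → Bool)) :
    #((Pclass n k).filter (fun f => zeroSet f ⊆ C)) ≤ (#C).choose k := by
  rw [← card_powersetCard]
  refine card_le_card_of_injOn zeroSet (fun f hf => ?_) zeroSet_injective.injOn
  simp only [coe_filter, Pclass, mem_filter, mem_univ, true_and, Set.mem_ofPred_eq] at hf
  exact mem_powersetCard.mpr ⟨hf.2, hf.1⟩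

theorem Implicant.zeroSet_subset {K : Conj n} {f : (Fin n → Bool) → Bool} (hK : Implicant K f) :
    zeroSet f ⊆ (univ.filter K.covers)ᶜ := by
  intro x hx
  simp only [zeroSet, mem_filter, mem_univ, true_and] at hx
  simpa [mem_compl, hx] using mt (hK x)

theorem card_filter_Pclass_implicant_le (K : Conj n) :
    #((Pclass n k).filter (Implicant K)) ≤ (2 ^ n - 2 ^ (n - K.rank)).choose k := by
  have hcompl : #(univ.filter K.covers)ᶜ = 2 ^ n - 2 ^ (n - K.rank) := by
    rw [card_compl, K.card_covers, Fintype.card_fun, Fintype.card_bool, Fintype.card_fin]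
  rw [← hcompl]
  exact (card_le_card (monotone_filter_right _ fun _ _ => Implicant.zeroSet_subset)).trans
    (card_filter_Pclass_zeroSet_subset_le _)

end Counting

def Conj.ofSigns {n : ℕ} (s t : Finset (Fin n)) : Conj n :=
  ⟨s, fun i => decide (i ∈ t)⟩

theorem Conj.covers_ofSigns_supp_filter {n : ℕ} (K : Conj n) :
    (Conj.ofSigns K.supp (K.supp.filter (K.sgn · = true))).covers = K.covers := by
  funext x
  simp only [Conj.covers, Conj.ofSigns]
  exact propext <| forall₂_congr fun i hi => by simp [hi]

theorem card_filter_Pclass_exists_implicant_le (n d k : ℕ) :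
    #((Pclass n k).filter (fun f => ∃ K : Conj n, K.rank = d ∧ Implicant K f)) ≤
      n.choose d * 2 ^ d * (2 ^ n - 2 ^ (n - d)).choose k := by
  set signedSupports := (powersetCard d (univ : Finset (Fin n))).sigma powerset
  have hcard : #signedSupports = n.choose d * 2 ^ d := by
    rw [card_sigma, sum_congr rfl fun s hs => by rw [card_powerset, (mem_powersetCard.1 hs).2],
      sum_const, card_powersetCard, card_univ, Fintype.card_fin, smul_eq_mul]
  rw [← hcard]
  refine (card_le_card fun f hf => ?_).trans (card_biUnion_le_card_mul signedSupports
    (fun p => (Pclass n k).filter (Implicant (Conj.ofSigns p.1 p.2))) _ fun p hp => ?_)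
  · obtain ⟨hfP, K, rfl, hK⟩ := mem_filter.mp hf
    refine mem_biUnion.mpr ⟨⟨K.supp, K.supp.filter (K.sgn · = true)⟩, ?_, mem_filter.mpr ⟨hfP, ?_⟩⟩
    · exact mem_sigma.mpr ⟨mem_powersetCard.mpr ⟨subset_univ _, rfl⟩,
        mem_powerset.mpr (filter_subset _ _)⟩
    · rwa [Implicant, Conj.covers_ofSigns_supp_filter]
  · simpa [(mem_powersetCard.mp (mem_sigma.mp hp).1).2, Conj.rank, Conj.ofSigns] using
      card_filter_Pclass_implicant_le (k := k) (Conj.ofSigns p.1 p.2)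

theorem stmt1_general (n d k : ℕ) :
    frac n k (fun f => ∃ K : Conj n, K.rank = d ∧ Implicant K f) ≤
      (2 : ℝ) ^ d * (Nat.choose n d : ℝ) * (1 - 1 / 2 ^ d : ℝ) ^ k := by
  set a := 2 ^ n - 2 ^ (n - d)
  have hratio : (a.choose k : ℝ) / (2 ^ n).choose k ≤ (1 - 1 / 2 ^ d) ^ k := by
    refine (choose_div_choose_le_div_pow (Nat.sub_le _ _) k).trans ?_
    push_cast
    gcongr
    exact_mod_cast two_pow_sub_two_pow_div_two_pow_le n d
  rw [frac, card_Pclass]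
  calc _ ≤ ((n.choose d * 2 ^ d * a.choose k : ℕ) : ℝ) / (2 ^ n).choose k := by
        gcongr
        exact_mod_cast card_filter_Pclass_exists_implicant_le n d k
    _ = 2 ^ d * n.choose d * ((a.choose k : ℝ) / (2 ^ n).choose k) := by
        push_cast
        ring
    _ ≤ _ := by gcongr

/-- The fraction of functions in `P_k^n` possessing at least one implicant of
rank `d` is at most `2^d · C(n, d) · (1 − 2^(−d))^k`. -/
theorem stmt1 (n d k : ℕ) (hn : 1 ≤ n) (hd1 : 1 ≤ d) (hdn : d ≤ n)
    (hk1 : 1 ≤ k) (hk2 : k ≤ 2 ^ n - 2 ^ (n - d)) :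
    frac n k (fun f => ∃ K : Conj n, K.rank = d ∧ Implicant K f) ≤
      (2 : ℝ) ^ d * (Nat.choose n d : ℝ) * (1 - 1 / 2 ^ d : ℝ) ^ k :=
  stmt1_general n d k
end

section
/- Let f be a Boolean function on n variables, let K be an implicant of f, and let z be a zero of f (f z = false). Then K covers at most one point of the set {y : y is at Hamming distance 1 from z and f y = true}; i.e., the set of points covered by K within this set has cardinality at most 1. -/
open scoped Classical

/-! Since `z` is a zero of `f`, the implicant `K` does not cover `z`, so `z` violates some literal
`i` of `K`. A neighbour of `z` covered by `K` must therefore differ from `z` exactly in coordinate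
`i`, which determines it. -/

theorem apply_eq_of_hammingDist_eq_one {ι : Type*} [Fintype ι] {β : ι → Type*}
    [∀ i, DecidableEq (β i)] {x y : ∀ i, β i} (h : hammingDist x y = 1) {i j : ι}
    (hi : x i ≠ y i) (hji : j ≠ i) : x j = y j := by
  by_contra hj
  have hsub : ({i, j} : Finset ι) ⊆ Finset.univ.filter fun k => x k ≠ y k := by
    simp [Finset.insert_subset_iff, hi, hj]
  have := Finset.card_le_card hsub
  rw [Finset.card_pair hji.symm] at this
  unfold hammingDist at h
  omega

theorem eq_of_hammingDist_eq_one_of_apply_ne {ι : Type*} [Fintype ι] {x y z : ι → Bool}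
    (hx : hammingDist x z = 1) (hy : hammingDist y z = 1) {i : ι} (hxi : x i ≠ z i)
    (hyi : y i ≠ z i) : x = y := by
  funext j
  by_cases hji : j = i
  · subst hji
    rw [Bool.eq_not_of_ne hxi, Bool.eq_not_of_ne hyi]
  · rw [apply_eq_of_hammingDist_eq_one hx hxi hji, apply_eq_of_hammingDist_eq_one hy hyi hji]

theorem Implicant.not_covers {n : ℕ} {K : Conj n} {f : (Fin n → Bool) → Bool}
    (hK : Implicant K f) {z : Fin n → Bool} (hz : f z = false) : ¬ K.covers z :=
  fun hc => by simp [hK z hc] at hz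

theorem Conj.exists_mem_supp_ne_of_not_covers {n : ℕ} {K : Conj n} {z : Fin n → Bool}
    (h : ¬ K.covers z) : ∃ i ∈ K.supp, z i ≠ K.sgn i := by
  simpa [Conj.covers] using h

/-- If `K` is an implicant of `f` and `z` is a zero of `f`, then `K` covers at
most one point of the set of ones of `f` at Hamming distance 1 from `z`. -/
theorem stmt10 (n : ℕ) (f : (Fin n → Bool) → Bool) (K : Conj n)
    (hK : Implicant K f) (z : Fin n → Bool) (hz : f z = false) :
    (Finset.univ.filter
        (fun y : Fin n → Bool =>
          hammingDist y z = 1 ∧ f y = true ∧ K.covers y)).card ≤ 1 := by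
  obtain ⟨i, hi, hzi⟩ := K.exists_mem_supp_ne_of_not_covers (hK.not_covers hz)
  rw [Finset.card_le_one]
  simp only [Finset.mem_filter, Finset.mem_univ, true_and]
  rintro y₁ ⟨hd₁, -, hc₁⟩ y₂ ⟨hd₂, -, hc₂⟩
  exact eq_of_hammingDist_eq_one_of_apply_ne hd₁ hd₂ (hc₁ i hi ▸ hzi.symm) (hc₂ i hi ▸ hzi.symm)
end

section
/- Let f be a Boolean function on n variables with exactly k ≥ 1 zeros, and let Θ be its set of near-zero points, i.e. Θ = {y : f y = true and y is at Hamming distance 1 from some zero of f}. Then every DNF realization D of f satisfies |D| ≥ |Θ| / k. -/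
open scoped Classical

/-!
Charge each near-zero point `y` to a pair `(K, z)` with `K ∈ D` covering `y` and `z` a zero
adjacent to `y`. Since `K` is an implicant it misses `z`, so the coordinate where `y` and `z`
differ lies in the support of `K`; this pins that coordinate, and with it `y`, down from
`(K, z)`. Hence at most `|D| · k` near-zero points.
-/

open Finset

lemma exists_eq_update_not_of_hammingDist_eq_one {ι : Type*} [Fintype ι] [DecidableEq ι]
    {y z : ι → Bool} (h : hammingDist y z = 1) : ∃ i, y = Function.update z i (!z i) := by
  obtain ⟨i, hi⟩ := card_eq_one.mp h
  refine ⟨i, funext fun m => ?_⟩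
  have hm := Finset.ext_iff.mp hi m
  simp only [mem_filter, mem_univ, true_and, mem_singleton] at hm
  by_cases hmi : m = i
  · subst hmi
    simpa [Bool.eq_not_iff] using hm.mpr rfl
  · simpa [hmi] using hm

variable {n : ℕ}

theorem Implicant.eq_of_covers_of_hammingDist_eq_one {K : Conj n} {f : (Fin n → Bool) → Bool}
    (hK : Implicant K f) {z y₁ y₂ : Fin n → Bool} (hz : f z = false)
    (h₁ : K.covers y₁) (h₂ : K.covers y₂)
    (d₁ : hammingDist y₁ z = 1) (d₂ : hammingDist y₂ z = 1) : y₁ = y₂ := by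
  obtain ⟨i, rfl⟩ := exists_eq_update_not_of_hammingDist_eq_one d₁
  obtain ⟨j, rfl⟩ := exists_eq_update_not_of_hammingDist_eq_one d₂
  have hiK : i ∈ K.supp := by
    by_contra hiK
    have hcov : K.covers z := fun m hm => by
      rw [← h₁ m hm, Function.update_of_ne (ne_of_mem_of_not_mem hm hiK)]
    simp [hK z hcov] at hz
  have hji : j = i := by
    by_contra hji
    have := (h₂ i hiK).trans (h₁ i hiK).symm
    simp [Function.update_of_ne (Ne.symm hji)] at this
  rw [hji]

def nearZeros (f : (Fin n → Bool) → Bool) : Finset (Fin n → Bool) :=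
  univ.filter fun y => f y = true ∧ ∃ z, f z = false ∧ hammingDist y z = 1

theorem IsDNF.card_nearZeros_le {f : (Fin n → Bool) → Bool} {D : Finset (Conj n)}
    (hD : IsDNF f D) : (nearZeros f).card ≤ D.card * zerosCard f := by
  set Z := univ.filter fun x : Fin n → Bool => f x = false
  let charged (p : Conj n × (Fin n → Bool)) :=
    univ.filter fun y => p.1.covers y ∧ hammingDist y p.2 = 1
  have hsub : nearZeros f ⊆ (D ×ˢ Z).biUnion charged := by
    intro y hy
    obtain ⟨hfy, z, hz, hyz⟩ := (mem_filter.mp hy).2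
    obtain ⟨K, hKD, hKy⟩ := (hD y).mp hfy
    exact mem_biUnion.mpr ⟨(K, z), by simp [Z, hKD, hz], by simp [charged, hKy, hyz]⟩
  have hcharged : ∀ p ∈ D ×ˢ Z, (charged p).card ≤ 1 := by
    rintro ⟨K, z⟩ hp
    obtain ⟨hKD, hz⟩ := mem_product.mp hp
    have hK : Implicant K f := fun x hx => (hD x).mpr ⟨K, hKD, hx⟩
    refine card_le_one.mpr fun y₁ hy₁ y₂ hy₂ => ?_
    simp only [charged, mem_filter, mem_univ, true_and] at hy₁ hy₂
    exact hK.eq_of_covers_of_hammingDist_eq_one (mem_filter.mp hz).2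
      hy₁.1 hy₂.1 hy₁.2 hy₂.2
  calc (nearZeros f).card ≤ ((D ×ˢ Z).biUnion charged).card := card_le_card hsub
    _ ≤ (D ×ˢ Z).card * 1 := card_biUnion_le_card_mul _ _ _ hcharged
    _ = D.card * zerosCard f := by rw [mul_one, card_product]; rfl

theorem stmt11_general (n k : ℕ) (f : (Fin n → Bool) → Bool)
    (hzeros : zerosCard f = k)
    (D : Finset (Conj n)) (hD : IsDNF f D) :
    ((Finset.univ.filter
        (fun y : Fin n → Bool =>
          f y = true ∧ ∃ z : Fin n → Bool, f z = false ∧ hammingDist y z = 1)).card : ℝ) / k ≤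
      (D.card : ℝ) := by
  subst hzeros
  have hcard : ((nearZeros f).card : ℝ) ≤ D.card * zerosCard f := by
    exact_mod_cast hD.card_nearZeros_le
  exact div_le_of_le_mul₀ (Nat.cast_nonneg _) (Nat.cast_nonneg _) hcard

/-- If `f` has exactly `k ≥ 1` zeros and `Θ` is the set of near-zero points of
`f` (ones of `f` at Hamming distance 1 from some zero of `f`), then every DNF realization `D`
of `f` satisfies `|D| ≥ |Θ| / k`. -/
theorem stmt11 (n k : ℕ) (f : (Fin n → Bool) → Bool)
    (hk : 1 ≤ k) (hzeros : zerosCard f = k)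
    (D : Finset (Conj n)) (hD : IsDNF f D) :
    ((Finset.univ.filter
        (fun y : Fin n → Bool =>
          f y = true ∧ ∃ z : Fin n → Bool, f z = false ∧ hammingDist y z = 1)).card : ℝ) / k ≤
      (D.card : ℝ) :=
  stmt11_general n k f hzeros D hD
end

section
/- Let n ≥ 1 and let f be the parity (linear) function on n variables, f x = true iff the number of coordinates i with x i = true is odd. Then every DNF realization of f has length at least 2^{n−1}, and moreover every conjunction belonging to a DNF realization of f has rank exactly n. -/
open scoped Classical

/-!
Flipping one coordinate changes the parity of a point. Hence a conjunction omitting some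
variable, which covers together with any point its flip in that variable, can never be an
implicant of the parity function: every term of a DNF realization has full rank, and so covers
exactly one point. The same flip is a bijection between the odd and the even points, so there
are `2^(n-1)` odd points, each needing its own term.
-/

open Finset

theorem odd_card_filter_update_not_iff {n : ℕ} (x : Fin n → Bool) (i : Fin n) :
    Odd #{j | Function.update x i (!x i) j = true} ↔ ¬ Odd #{j | x j = true} := by
  by_cases hxi : x i = true
  · have hset : ({j | Function.update x i (!x i) j = true} : Finset (Fin n))
        = ({j | x j = true} : Finset (Fin n)).erase i := by
      ext j
      by_cases hj : j = i
      · subst hj; simp [hxi]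
      · simp [hj]
    rw [hset, ← card_erase_add_one (s := {j | x j = true}) (by simpa), Nat.odd_add_one, not_not]
  · have hset : ({j | Function.update x i (!x i) j = true} : Finset (Fin n))
        = insert i ({j | x j = true} : Finset (Fin n)) := by
      ext j
      by_cases hj : j = i
      · subst hj; simp [hxi]
      · simp [hj]
    rw [hset, card_insert_of_notMem (by simpa using hxi), Nat.odd_add_one]

theorem IsDNF.implicant_of_mem {n : ℕ} {f : (Fin n → Bool) → Bool} {D : Finset (Conj n)}
    (hD : IsDNF f D) {K : Conj n} (hK : K ∈ D) : Implicant K f :=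
  fun x hx => (hD x).2 ⟨K, hK, hx⟩

theorem Implicant.supp_eq_univ {n : ℕ} {f : (Fin n → Bool) → Bool} {K : Conj n}
    (hflip : ∀ x i, f (Function.update x i (!x i)) = !f x) (hK : Implicant K f) :
    K.supp = univ := by
  refine eq_univ_of_forall fun i => ?_
  by_contra hi
  have hcov : K.covers K.sgn := fun _ _ => rfl
  have hcov' : K.covers (Function.update K.sgn i (!K.sgn i)) := fun j hj => by
    rw [Function.update_of_ne (ne_of_mem_of_not_mem hj hi)]
  have := hflip K.sgn i
  rw [hK _ hcov, hK _ hcov'] at this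
  exact absurd this (by decide)

theorem Conj.eq_sgn_of_covers {n : ℕ} {K : Conj n} (hK : K.supp = univ)
    {x : Fin n → Bool} (hx : K.covers x) : x = K.sgn :=
  funext fun i => hx i (hK ▸ mem_univ i)

theorem card_filter_eq_true_of_update_not {n : ℕ} {f : (Fin n → Bool) → Bool} (i : Fin n)
    (hflip : ∀ x, f (Function.update x i (!x i)) = !f x) :
    #{x | f x = true} = 2 ^ (n - 1) := by
  set flip : (Fin n → Bool) → Fin n → Bool := fun x => Function.update x i (!x i)
  have hinv : Function.Involutive flip := fun x => by simp [flip]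
  have hhalves : #{x | f x = true} = #{x | ¬ f x = true} :=
    card_nbij' flip flip (fun x hx => by simp_all [flip]) (fun x hx => by simp_all [flip])
      (fun x _ => hinv x) (fun x _ => hinv x)
  have htotal := card_filter_add_card_filter_not (s := univ) fun x : Fin n → Bool => f x = true
  rw [card_univ, Fintype.card_fun, Fintype.card_bool, Fintype.card_fin] at htotal
  have : 2 ^ n = 2 * 2 ^ (n - 1) := by
    rw [← pow_succ', Nat.sub_add_cancel (Fin.pos i)]
  omega

theorem IsDNF.card_filter_eq_true_le {n : ℕ} {f : (Fin n → Bool) → Bool} {D : Finset (Conj n)}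
    (hD : IsDNF f D) (hfull : ∀ K ∈ D, K.supp = univ) :
    #{x | f x = true} ≤ #D := by
  refine card_le_card_of_surjOn Conj.sgn fun x hx => ?_
  obtain ⟨K, hK, hcov⟩ := (hD x).1 (mem_filter.1 hx).2
  exact ⟨K, hK, (Conj.eq_sgn_of_covers (hfull K hK) hcov).symm⟩

/-- For the parity function `f` on `n ≥ 1` variables, every DNF realization of
`f` has length at least `2^(n−1)`, and every conjunction belonging to a DNF realization of
`f` has rank exactly `n`. -/
theorem stmt14 (n : ℕ) (hn : 1 ≤ n)
    (f : (Fin n → Bool) → Bool)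
    (hf : ∀ x, f x = true ↔ Odd (Finset.univ.filter (fun i => x i = true)).card)
    (D : Finset (Conj n)) (hD : IsDNF f D) :
    2 ^ (n - 1) ≤ D.card ∧ ∀ K ∈ D, K.rank = n := by
  have hflip : ∀ x i, f (Function.update x i (!x i)) = !f x := by
    intro x i
    rw [Bool.eq_not_iff, ne_eq, Bool.eq_iff_iff, hf, hf, odd_card_filter_update_not_iff]
    exact not_iff_self
  have hfull : ∀ K ∈ D, K.supp = univ := fun K hK => (hD.implicant_of_mem hK).supp_eq_univ hflip
  refine ⟨?_, fun K hK => by rw [Conj.rank, hfull K hK, card_univ, Fintype.card_fin]⟩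
  rw [← card_filter_eq_true_of_update_not ⟨0, hn⟩ (hflip · _)]
  exact hD.card_filter_eq_true_le hfull
end
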